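/- arXiv:1304.3744 — 2 statements merged into one kernel-verified Lean document; each statement's English description precedes it below -/
import Mathlib

section
/- (Discrete momentum conservation) Let τ: 𝔤 → G satisfy τ(ξ)τ(-ξ) = e and let Dτ_ξ be its left-trivialized differential. Suppose gₖ₊₁ = τ(hξₖ)·gₖ and μₖ₊₁ = (Dτ⁻¹_{-hξₖ})* (Dτ_{hξₖ})* μₖ. Then Ad*_{gₖ₊₁} μₖ₊₁ = Ad*_{gₖ} μₖ. -/
/-!
Differentiating `τ ξ * τ (-ξ) = 1` gives `Fτ_ξ η · τ(-ξ) = τ(ξ) · Fτ_{-ξ} η`, which for the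
left-trivialized differential reads `Dτ_{-ξ} = Ad_{τ(ξ)} ∘ Dτ_ξ`. Hence
`(Dτ_{-hξ})⁻¹ (τ(hξ) u τ(-hξ)) = (Dτ_{hξ})⁻¹ u`, so the update of `μ` exactly undoes the
conjugation by `τ(hξ)` in `gₖ₊₁ = τ(hξ) gₖ`.
-/

section LeftTrivializedDifferential

variable {𝕜 E A : Type*} [NontriviallyNormedField 𝕜] [NormedAddCommGroup E] [NormedSpace 𝕜 E]
  [NormedRing A] [NormedAlgebra 𝕜 A] {τ : E → A}

theorem apply_mul_eq_mul_apply_of_mul_neg_eq_one (hinv : ∀ ξ, τ ξ * τ (-ξ) = 1)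
    {ξ : E} {F F' : E →L[𝕜] A} (hF : HasFDerivAt τ F ξ) (hF' : HasFDerivAt τ F' (-ξ)) (η : E) :
    F η * τ (-ξ) = τ ξ * F' η := by
  have hτneg : HasFDerivAt (fun ζ => τ (-ζ)) (-F') ξ := by
    simpa [Function.comp_def] using hF'.comp ξ (hasFDerivAt_id ξ).neg
  have hprod_const : HasFDerivAt (fun ζ => τ ζ * τ (-ζ)) (0 : E →L[𝕜] A) ξ := by
    simpa only [hinv] using hasFDerivAt_const (1 : A) ξ
  have hzero := congrArg (· η) ((hF.mul' hτneg).unique hprod_const)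
  simp only [add_apply, neg_apply, zero_apply, smul_apply, smul_eq_mul, mul_neg] at hzero
  exact (neg_add_eq_zero.mp hzero).symm

variable {Fτ : E → E →L[𝕜] A} {D : E → E ≃ₗ[𝕜] A}

theorem leftTrivializedDifferential_neg_apply (hinv : ∀ ξ, τ ξ * τ (-ξ) = 1)
    (hF : ∀ ξ, HasFDerivAt τ (Fτ ξ) ξ) (hD : ∀ ξ η, D ξ η = τ (-ξ) * Fτ ξ η) (ξ η : E) :
    D (-ξ) η = τ ξ * D ξ η * τ (-ξ) := by
  rw [hD, hD, neg_neg, ← apply_mul_eq_mul_apply_of_mul_neg_eq_one hinv (hF ξ) (hF (-ξ)),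
    ← mul_assoc, hinv, one_mul]

theorem leftTrivializedDifferential_neg_symm_conj (hinv : ∀ ξ, τ ξ * τ (-ξ) = 1)
    (hF : ∀ ξ, HasFDerivAt τ (Fτ ξ) ξ) (hD : ∀ ξ η, D ξ η = τ (-ξ) * Fτ ξ η) (ξ : E) (u : A) :
    (D (-ξ)).symm (τ ξ * u * τ (-ξ)) = (D ξ).symm u := by
  rw [LinearEquiv.symm_apply_eq, leftTrivializedDifferential_neg_apply hinv hF hD,
    LinearEquiv.apply_symm_apply]

end LeftTrivializedDifferential

theorem discrete_momentum_conservation_general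
    {A : Type*} [NormedRing A] [NormedAlgebra ℝ A]
    (τ : A → A) (Fτ : A → A →L[ℝ] A) (D : A → (A ≃ₗ[ℝ] A))
    (hinv : ∀ ξ : A, τ ξ * τ (-ξ) = 1)
    (hF : ∀ ξ : A, HasFDerivAt τ (Fτ ξ) ξ)
    (hD : ∀ ξ η : A, D ξ η = τ (-ξ) * Fτ ξ η)
    (h : ℝ) (ξk : A) (gk gkInv : A)
    (μk μk1 : Module.Dual ℝ A)
    (hupdate : ∀ v : A, μk1 v = μk (D (h • ξk) ((D (-(h • ξk))).symm v))) :
    ∀ v : A,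
      μk1 ((τ (h • ξk) * gk) * v * (gkInv * τ (-(h • ξk))))
        = μk (gk * v * gkInv) := by
  intro v
  have hconj : (τ (h • ξk) * gk) * v * (gkInv * τ (-(h • ξk)))
      = τ (h • ξk) * (gk * v * gkInv) * τ (-(h • ξk)) := by
    simp only [mul_assoc]
  rw [hconj, hupdate, leftTrivializedDifferential_neg_symm_conj hinv hF hD,
    LinearEquiv.apply_symm_apply]

/-- Discrete momentum conservation.  In a matrix Lie group realized inside a
Banach algebra `A`, let `τ : 𝔤 → G` satisfy `τ(ξ)τ(-ξ) = e` with Fréchet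
derivative `Fτ` and (invertible) left-trivialized differential
`Dτ_ξ(η) = τ(ξ)⁻¹ Fτ_ξ(η) = τ(-ξ) Fτ_ξ(η)`.  If
`gₖ₊₁ = τ(hξₖ)·gₖ` and `μₖ₊₁ = (Dτ⁻¹_{-hξₖ})* (Dτ_{hξₖ})* μₖ`
(i.e. `μₖ₊₁(v) = μₖ(Dτ_{hξₖ}(Dτ_{-hξₖ}⁻¹ v))`), then
`Ad*_{gₖ₊₁} μₖ₊₁ = Ad*_{gₖ} μₖ`, i.e.
`μₖ₊₁(gₖ₊₁ v gₖ₊₁⁻¹) = μₖ(gₖ v gₖ⁻¹)` for all `v`. -/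
theorem discrete_momentum_conservation
    {A : Type*} [NormedRing A] [NormedAlgebra ℝ A] [CompleteSpace A]
    (τ : A → A) (Fτ : A → A →L[ℝ] A) (D : A → (A ≃ₗ[ℝ] A))
    (hinv : ∀ ξ : A, τ ξ * τ (-ξ) = 1)
    (hinv' : ∀ ξ : A, τ (-ξ) * τ ξ = 1)
    (hF : ∀ ξ : A, HasFDerivAt τ (Fτ ξ) ξ)
    (hD : ∀ ξ η : A, D ξ η = τ (-ξ) * Fτ ξ η)
    (h : ℝ) (hh : 0 < h) (ξk : A) (gk gkInv : A)
    (hgk : gk * gkInv = 1) (hgk' : gkInv * gk = 1)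
    (μk μk1 : Module.Dual ℝ A)
    (hupdate : ∀ v : A, μk1 v = μk (D (h • ξk) ((D (-(h • ξk))).symm v))) :
    ∀ v : A,
      μk1 ((τ (h • ξk) * gk) * v * (gkInv * τ (-(h • ξk))))
        = μk (gk * v * gkInv) :=
  discrete_momentum_conservation_general τ Fτ D hinv hF hD h ξk gk gkInv μk μk1 hupdate
end

section
/- Under the hypotheses τ(ξ)τ(-ξ) = e and Dτ_ξ invertible, the composed dual operator satisfies (Dτ⁻¹_{-hξ})* ∘ (Dτ_{hξ})* = Ad*_{τ(-hξ)} as maps 𝔤* → 𝔤*. -/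
/-!
Differentiating `τ(ξ) τ(-ξ) = 1` gives `Fτ_ξ(η) τ(-ξ) = τ(ξ) Fτ_{-ξ}(η)`, so
`Dτ_ξ(η) = τ(-ξ) Dτ_{-ξ}(η) τ(ξ)`, i.e. `Dτ_ξ = Ad_{τ(-ξ)} ∘ Dτ_{-ξ}`. Precomposing with
`Dτ_{-ξ}⁻¹` leaves `Ad_{τ(-ξ)}`.
-/

open ContinuousLinearMap

section

variable {𝕜 E F : Type*} [NontriviallyNormedField 𝕜] [NormedAddCommGroup E] [NormedSpace 𝕜 E]
  [NormedAddCommGroup F] [NormedSpace 𝕜 F]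

theorem HasFDerivAt.comp_neg {f : E → F} {f' : E →L[𝕜] F} {x : E}
    (hf : HasFDerivAt f f' (-x)) : HasFDerivAt (fun y => f (-y)) (-f') x := by
  simpa [Function.comp_def] using hf.comp x (hasFDerivAt_id x).neg

end

section

variable {𝕜 E A : Type*} [NontriviallyNormedField 𝕜] [NormedAddCommGroup E] [NormedSpace 𝕜 E]
  [NormedRing A] [NormedAlgebra 𝕜 A] {τ : E → A} {Fτ : E → E →L[𝕜] A} {c : A}

theorem deriv_apply_mul_neg_eq_of_mul_comp_neg_const (hc : ∀ ξ, τ ξ * τ (-ξ) = c)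
    (hF : ∀ ξ, HasFDerivAt τ (Fτ ξ) ξ) (a η : E) :
    Fτ a η * τ (-a) = τ a * Fτ (-a) η := by
  have hprod := (hF a).fun_mul' (hF (-a)).comp_neg
  rw [funext hc] at hprod
  have h0 := congrArg (· η) ((hasFDerivAt_const c a).unique hprod)
  simp only [zero_apply, add_apply, smul_apply, neg_apply, op_smul_eq_mul, smul_eq_mul,
    mul_neg] at h0
  exact (neg_add_eq_zero.mp h0.symm).symm

theorem deriv_apply_eq_mul_deriv_neg_apply_mul (hc : ∀ ξ, τ ξ * τ (-ξ) = c)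
    (hF : ∀ ξ, HasFDerivAt τ (Fτ ξ) ξ) {a : E} (ha : τ (-a) * τ a = 1) (η : E) :
    Fτ a η = τ a * Fτ (-a) η * τ a := by
  rw [← deriv_apply_mul_neg_eq_of_mul_comp_neg_const hc hF, mul_assoc, ha, mul_one]

end

theorem dual_Dtau_composition_eq_coAd_general
    {A : Type*} [NormedRing A] [NormedAlgebra ℝ A]
    (τ : A → A) (Fτ : A → A →L[ℝ] A) (D : A → (A ≃ₗ[ℝ] A))
    (hinv : ∀ ξ : A, τ ξ * τ (-ξ) = 1)
    (hinv' : ∀ ξ : A, τ (-ξ) * τ ξ = 1)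
    (hF : ∀ ξ : A, HasFDerivAt τ (Fτ ξ) ξ)
    (hD : ∀ ξ η : A, D ξ η = τ (-ξ) * Fτ ξ η)
    (h : ℝ) (ξ : A) :
    ∀ (μ : Module.Dual ℝ A) (v : A),
      μ (D (h • ξ) ((D (-(h • ξ))).symm v))
        = μ (τ (-(h • ξ)) * v * τ (h • ξ)) := by
  intro μ v
  set a := h • ξ
  set η := (D (-a)).symm v
  have hv : τ a * Fτ (-a) η = v := by
    rw [← (D (-a)).apply_symm_apply v, hD, neg_neg]
  rw [hD, deriv_apply_eq_mul_deriv_neg_apply_mul hinv hF (hinv' a), hv, mul_assoc]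

/-- Under `τ(ξ)τ(-ξ) = e` and invertibility of the left-trivialized
differential `Dτ_ξ(η) = τ(-ξ)·Fτ_ξ(η)`, the composed dual operator satisfies
`(Dτ⁻¹_{-hξ})* ∘ (Dτ_{hξ})* = Ad*_{τ(-hξ)}` on `𝔤*`: for every covector `μ`
and every `v`, `μ(Dτ_{hξ}(Dτ_{-hξ}⁻¹ v)) = μ(τ(-hξ) · v · τ(-hξ)⁻¹)`, where
`τ(-hξ)⁻¹ = τ(hξ)`. -/
theorem dual_Dtau_composition_eq_coAd
    {A : Type*} [NormedRing A] [NormedAlgebra ℝ A] [CompleteSpace A]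
    (τ : A → A) (Fτ : A → A →L[ℝ] A) (D : A → (A ≃ₗ[ℝ] A))
    (hinv : ∀ ξ : A, τ ξ * τ (-ξ) = 1)
    (hinv' : ∀ ξ : A, τ (-ξ) * τ ξ = 1)
    (hF : ∀ ξ : A, HasFDerivAt τ (Fτ ξ) ξ)
    (hD : ∀ ξ η : A, D ξ η = τ (-ξ) * Fτ ξ η)
    (h : ℝ) (ξ : A) :
    ∀ (μ : Module.Dual ℝ A) (v : A),
      μ (D (h • ξ) ((D (-(h • ξ))).symm v))
        = μ (τ (-(h • ξ)) * v * τ (h • ξ)) :=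
  dual_Dtau_composition_eq_coAd_general τ Fτ D hinv hinv' hF hD h ξ
end
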